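/- Let Π ∈ Π_{q,r}. Then the set Z_r(Π) has nonempty interior (as a subset of ℝ^{r×q}) if and only if Π₂₂ = 0 or the generalized Schur complement Π|Π₂₂ is positive definite. -/

import Mathlib

/-!
Completing the square, `qmi P Z = Π|Π₂₂ + (Z - Z₀)ᵀ Π₂₂ (Z - Z₀)` with `Z₀ = -Π₂₂^† Π₂₁`; this
uses `ker Π₂₂ ⊆ ker Π₁₂`. If `Π|Π₂₂ ≻ 0`, then `Z₀` solves the strict inequality, whose solution
set is open. If `Π₂₂ = 0`, every `Z` is a solution. Otherwise take `x ≠ 0` with `(Π|Π₂₂) x = 0`: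
since `Π₂₂ ⪯ 0`, every solution satisfies the linear constraint `Π₂₂ (Z - Z₀) x = 0`, which is
nontrivial when `Π₂₂ ≠ 0`, so all solutions lie in a proper affine subspace.
-/

open Matrix
open scoped Classical

/-- The Moore–Penrose pseudoinverse of a real matrix, defined via its four
characterizing Penrose conditions (which determine it uniquely). -/
noncomputable def pinv {m n : ℕ} (A : Matrix (Fin m) (Fin n) ℝ) : Matrix (Fin n) (Fin m) ℝ :=
  if h : ∃ B : Matrix (Fin n) (Fin m) ℝ,
      A * B * A = A ∧ B * A * B = B ∧ (A * B)ᵀ = A * B ∧ (B * A)ᵀ = B * A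
  then h.choose else 0

/-- The unique positive semidefinite square root of a positive semidefinite matrix
(defined by its characterizing property, which determines it uniquely). -/
noncomputable def msqrt {n : ℕ} (A : Matrix (Fin n) (Fin n) ℝ) : Matrix (Fin n) (Fin n) ℝ :=
  if h : ∃ B : Matrix (Fin n) (Fin n) ℝ, B.PosSemidef ∧ B * B = A then h.choose else 0

/-- The quadratic matrix expression `[I; Z]ᵀ Π [I; Z]`. -/
noncomputable def qmi {q r : ℕ} (P : Matrix (Fin q ⊕ Fin r) (Fin q ⊕ Fin r) ℝ)
    (Z : Matrix (Fin r) (Fin q) ℝ) : Matrix (Fin q) (Fin q) ℝ :=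
  (fromRows (1 : Matrix (Fin q) (Fin q) ℝ) Z)ᵀ * P * fromRows 1 Z

/-- The solution set `Z_r(Π)` of the nonstrict QMI. -/
def ZrSet {q r : ℕ} (P : Matrix (Fin q ⊕ Fin r) (Fin q ⊕ Fin r) ℝ) :
    Set (Matrix (Fin r) (Fin q) ℝ) := {Z | (qmi P Z).PosSemidef}

/-- The solution set `Z_r⁺(Π)` of the strict QMI. -/
def ZrPlusSet {q r : ℕ} (P : Matrix (Fin q ⊕ Fin r) (Fin q ⊕ Fin r) ℝ) :
    Set (Matrix (Fin r) (Fin q) ℝ) := {Z | (qmi P Z).PosDef}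

/-- The solution set `Z_r⁰(Π)` of the quadratic matrix equality. -/
def ZrZeroSet {q r : ℕ} (P : Matrix (Fin q ⊕ Fin r) (Fin q ⊕ Fin r) ℝ) :
    Set (Matrix (Fin r) (Fin q) ℝ) := {Z | qmi P Z = 0}

/-- Generalized Schur complement `Π|Π₂₂ = Π₁₁ − Π₁₂ Π₂₂^† Π₂₁`. -/
noncomputable def schurC {q r : ℕ} (P : Matrix (Fin q ⊕ Fin r) (Fin q ⊕ Fin r) ℝ) :
    Matrix (Fin q) (Fin q) ℝ :=
  P.toBlocks₁₁ - P.toBlocks₁₂ * pinv P.toBlocks₂₂ * P.toBlocks₂₁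

/-- Membership in the class `Π_{q,r}`: symmetric, `Π₂₂ ⪯ 0`, `Π|Π₂₂ ⪰ 0`,
and `ker Π₂₂ ⊆ ker Π₁₂`. -/
def memPi {q r : ℕ} (P : Matrix (Fin q ⊕ Fin r) (Fin q ⊕ Fin r) ℝ) : Prop :=
  P.IsSymm ∧ (-P.toBlocks₂₂).PosSemidef ∧ (schurC P).PosSemidef ∧
    ∀ x : Fin r → ℝ, P.toBlocks₂₂ *ᵥ x = 0 → P.toBlocks₁₂ *ᵥ x = 0

open Topology

section MoorePenrose

variable {m n : ℕ}

def IsMoorePenroseInverse (A : Matrix (Fin m) (Fin n) ℝ) (B : Matrix (Fin n) (Fin m) ℝ) : Prop :=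
  A * B * A = A ∧ B * A * B = B ∧ (A * B)ᵀ = A * B ∧ (B * A)ᵀ = B * A

theorem IsMoorePenroseInverse.unique {A : Matrix (Fin m) (Fin n) ℝ}
    {X Y : Matrix (Fin n) (Fin m) ℝ} (hX : IsMoorePenroseInverse A X)
    (hY : IsMoorePenroseInverse A Y) : X = Y := by
  obtain ⟨hX1, hX2, hX3, hX4⟩ := hX
  obtain ⟨hY1, hY2, hY3, hY4⟩ := hY
  have hAX : A * X = A * Y := by
    calc A * X = (A * X)ᵀ := hX3.symm
    _ = Xᵀ * (A * Y * A)ᵀ := by rw [hY1, transpose_mul]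
    _ = (A * X)ᵀ * (A * Y)ᵀ := by simp only [transpose_mul, Matrix.mul_assoc]
    _ = A * Y := by rw [hX3, hY3, ← Matrix.mul_assoc, hX1]
  have hXA : X * A = Y * A := by
    calc X * A = (X * A)ᵀ := hX4.symm
    _ = (A * Y * A)ᵀ * Xᵀ := by rw [hY1, transpose_mul]
    _ = (Y * A)ᵀ * (X * A)ᵀ := by simp only [transpose_mul, Matrix.mul_assoc]
    _ = Y * A := by rw [hX4, hY4, Matrix.mul_assoc, ← Matrix.mul_assoc A, hX1]
  calc X = X * A * X := hX2.symm
  _ = Y * A * Y := by rw [hXA, Matrix.mul_assoc, hAX, ← Matrix.mul_assoc]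
  _ = Y := hY2

theorem pinv_eq_of_isMoorePenroseInverse {A : Matrix (Fin m) (Fin n) ℝ}
    {B : Matrix (Fin n) (Fin m) ℝ} (hB : IsMoorePenroseInverse A B) : pinv A = B := by
  have h : ∃ B, IsMoorePenroseInverse A B := ⟨B, hB⟩
  exact (dif_pos h).trans (h.choose_spec.unique hB)

/-- In an eigenbasis `A = U diag(λ) Uᵀ`, the inverse is `U diag(λ⁻¹) Uᵀ` (with `0⁻¹ = 0`). -/
theorem Matrix.IsHermitian.exists_symm_isMoorePenroseInverse {A : Matrix (Fin n) (Fin n) ℝ}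
    (hA : A.IsHermitian) : ∃ B, IsMoorePenroseInverse A B ∧ Bᵀ = B := by
  set U : Matrix (Fin n) (Fin n) ℝ := ↑hA.eigenvectorUnitary
  have hUU : star U * U = 1 := (Matrix.mem_unitaryGroup_iff').mp hA.eigenvectorUnitary.2
  set D : (Fin n → ℝ) → Matrix (Fin n) (Fin n) ℝ := fun d => U * diagonal d * star U
  set ev := hA.eigenvalues
  have hA' : A = D ev := by simpa [D] using hA.spectral_theorem
  have hmul (d e : Fin n → ℝ) : D d * D e = D (d * e) := by
    calc D d * D e = U * diagonal d * (star U * U) * diagonal e * star U := by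
          simp only [D, Matrix.mul_assoc]
    _ = D (d * e) := by
          rw [hUU, Matrix.mul_one, Matrix.mul_assoc U, diagonal_mul_diagonal]; rfl
  have hsymm (d : Fin n → ℝ) : (D d)ᵀ = D d := by
    simp [D, transpose_mul, star_eq_conjTranspose, Matrix.mul_assoc]
  have hcancel : ev * ev⁻¹ * ev = ev := by
    funext i; simp only [Pi.mul_apply, Pi.inv_apply]
    rcases eq_or_ne (ev i) 0 with h | h <;> field_simp [h]
  have hcancel' : ev⁻¹ * ev * ev⁻¹ = ev⁻¹ := by
    funext i; simp only [Pi.mul_apply, Pi.inv_apply]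
    rcases eq_or_ne (ev i) 0 with h | h <;> field_simp [h]
  refine ⟨D ev⁻¹, ⟨?_, ?_, ?_, ?_⟩, hsymm _⟩ <;> rw [hA'] <;>
    simp only [hmul, hsymm, hcancel, hcancel']

theorem Matrix.IsHermitian.isMoorePenroseInverse_pinv {A : Matrix (Fin n) (Fin n) ℝ}
    (hA : A.IsHermitian) : IsMoorePenroseInverse A (pinv A) := by
  obtain ⟨B, hB, -⟩ := hA.exists_symm_isMoorePenroseInverse
  rwa [pinv_eq_of_isMoorePenroseInverse hB]

theorem Matrix.IsHermitian.transpose_pinv {A : Matrix (Fin n) (Fin n) ℝ}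
    (hA : A.IsHermitian) : (pinv A)ᵀ = pinv A := by
  obtain ⟨B, hB, hBt⟩ := hA.exists_symm_isMoorePenroseInverse
  rwa [pinv_eq_of_isMoorePenroseInverse hB]

/-- `1 - A† A` maps into `ker A`, on which `B` vanishes. -/
theorem mul_pinv_mul_of_ker_le {l : Type*} {A : Matrix (Fin n) (Fin n) ℝ}
    (hA : A.IsHermitian) {B : Matrix l (Fin n) ℝ} (hker : ∀ x, A *ᵥ x = 0 → B *ᵥ x = 0) :
    B * (pinv A * A) = B := by
  have hAN : A * (pinv A * A - 1) = 0 := by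
    rw [Matrix.mul_sub, ← Matrix.mul_assoc, hA.isMoorePenroseInverse_pinv.1, Matrix.mul_one,
      sub_self]
  have hBN : B * (pinv A * A - 1) = 0 := by
    refine Matrix.ext_of_mulVec_single fun j => ?_
    rw [← mulVec_mulVec, zero_mulVec]
    exact hker _ (by rw [mulVec_mulVec, hAN, zero_mulVec])
  rwa [Matrix.mul_sub, Matrix.mul_one, sub_eq_zero] at hBN

end MoorePenrose

section QMI

variable {q r : ℕ} {P : Matrix (Fin q ⊕ Fin r) (Fin q ⊕ Fin r) ℝ}

/-- The body of `qmi` is elaborated with the `CStarMatrix` default `HMul` instance; this restates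
it with the `Matrix` one, so that the `Matrix` API applies. -/
theorem qmi_eq_mul (P : Matrix (Fin q ⊕ Fin r) (Fin q ⊕ Fin r) ℝ) (Z : Matrix (Fin r) (Fin q) ℝ) :
    qmi P Z = (fromRows (1 : Matrix (Fin q) (Fin q) ℝ) Z)ᵀ * P *
      fromRows (1 : Matrix (Fin q) (Fin q) ℝ) Z :=
  rfl

theorem qmi_eq_blocks (P : Matrix (Fin q ⊕ Fin r) (Fin q ⊕ Fin r) ℝ)
    (Z : Matrix (Fin r) (Fin q) ℝ) :
    qmi P Z = P.toBlocks₁₁ + P.toBlocks₁₂ * Z + Zᵀ * P.toBlocks₂₁ + Zᵀ * P.toBlocks₂₂ * Z := by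
  rw [qmi_eq_mul, ← fromBlocks_toBlocks P, transpose_fromRows, Matrix.mul_assoc,
    fromBlocks_mul_fromRows, fromCols_mul_fromRows]
  simp only [transpose_one, Matrix.mul_one, Matrix.one_mul, Matrix.mul_add, toBlocks_fromBlocks₁₁,
    toBlocks_fromBlocks₁₂, toBlocks_fromBlocks₂₁, toBlocks_fromBlocks₂₂, Matrix.mul_assoc]
  abel

theorem continuous_qmi (P : Matrix (Fin q ⊕ Fin r) (Fin q ⊕ Fin r) ℝ) : Continuous (qmi P) := by
  rw [funext (qmi_eq_blocks P)]
  fun_prop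

theorem isHermitian_qmi (hs : P.IsSymm) (Z : Matrix (Fin r) (Fin q) ℝ) :
    (qmi P Z).IsHermitian := by
  rw [isHermitian_iff_isSymm, Matrix.IsSymm, qmi_eq_mul, transpose_mul, transpose_mul, hs.eq,
    transpose_transpose, Matrix.mul_assoc]

noncomputable def qmiCenter (P : Matrix (Fin q ⊕ Fin r) (Fin q ⊕ Fin r) ℝ) :
    Matrix (Fin r) (Fin q) ℝ :=
  -(pinv P.toBlocks₂₂ * P.toBlocks₂₁)

theorem qmi_eq_schurC_add (hs : P.IsSymm)
    (hker : ∀ x, P.toBlocks₂₂ *ᵥ x = 0 → P.toBlocks₁₂ *ᵥ x = 0) (Z : Matrix (Fin r) (Fin q) ℝ) :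
    qmi P Z = schurC P + (Z - qmiCenter P)ᵀ * P.toBlocks₂₂ * (Z - qmiCenter P) := by
  obtain ⟨-, h21, -, h22⟩ := isSymm_fromBlocks_iff.1 ((fromBlocks_toBlocks P).symm ▸ hs)
  have hA : P.toBlocks₂₂.IsHermitian := isHermitian_iff_isSymm.2 h22
  rw [qmi_eq_blocks, schurC, qmiCenter, sub_neg_eq_add, transpose_add, transpose_mul,
    hA.transpose_pinv, ← h21, transpose_transpose]
  set B := P.toBlocks₁₂
  set A := P.toBlocks₂₂
  set N := pinv A
  have hBNA {k : ℕ} (M : Matrix (Fin r) (Fin k) ℝ) : B * (N * (A * M)) = B * M := by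
    rw [← Matrix.mul_assoc N, ← Matrix.mul_assoc, mul_pinv_mul_of_ker_le hA hker]
  have hANB : A * (N * Bᵀ) = Bᵀ := by
    have hN : Nᵀ = N := hA.transpose_pinv
    simpa only [transpose_mul, hN, h22.eq, Matrix.mul_assoc, Matrix.mul_one,
      transpose_one] using congrArg transpose (hBNA (1 : Matrix (Fin r) (Fin r) ℝ))
  simp only [Matrix.add_mul, Matrix.mul_add, Matrix.mul_assoc, hBNA, hANB]
  abel

theorem qmi_qmiCenter (hs : P.IsSymm)
    (hker : ∀ x, P.toBlocks₂₂ *ᵥ x = 0 → P.toBlocks₁₂ *ᵥ x = 0) :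
    qmi P (qmiCenter P) = schurC P := by
  simp [qmi_eq_schurC_add hs hker]

end QMI

section Topology

variable {n : Type*} [Fintype n]

theorem Matrix.posDef_of_forall_sphere {M : Matrix n n ℝ} (hM : M.IsHermitian)
    (hpos : ∀ v ∈ Metric.sphere (0 : n → ℝ) 1, 0 < v ⬝ᵥ M *ᵥ v) : M.PosDef := by
  refine posDef_iff_dotProduct_mulVec.2 ⟨hM, fun v hv => ?_⟩
  have hnorm : 0 < ‖v‖ := norm_pos_iff.2 hv
  have hunit : ‖v‖⁻¹ • v ∈ Metric.sphere (0 : n → ℝ) 1 := by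
    rw [mem_sphere_zero_iff_norm, norm_smul, norm_inv, norm_norm, inv_mul_cancel₀ hnorm.ne']
  have h := hpos _ hunit
  rw [smul_dotProduct, mulVec_smul, dotProduct_smul, smul_eq_mul, smul_eq_mul] at h
  have hinv : 0 ≤ ‖v‖⁻¹ := (inv_pos.2 hnorm).le
  simpa using pos_of_mul_pos_right (pos_of_mul_pos_right h hinv) hinv

/-- Positivity on the compact unit sphere is an open condition. -/
theorem isOpen_setOf_posDef {X : Type*} [TopologicalSpace X] {f : X → Matrix n n ℝ}
    (hf : Continuous f) (hherm : ∀ x, (f x).IsHermitian) : IsOpen {x | (f x).PosDef} := by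
  refine isOpen_iff_eventually.2 fun x₀ hx₀ => ?_
  have hg : Continuous fun p : X × (n → ℝ) => p.2 ⬝ᵥ f p.1 *ᵥ p.2 := by fun_prop
  have hnear : ∀ᶠ x in 𝓝 x₀, ∀ v ∈ Metric.sphere (0 : n → ℝ) 1, 0 < v ⬝ᵥ f x *ᵥ v := by
    refine (isCompact_sphere 0 1).eventually_forall_of_forall_eventually fun v hv => ?_
    refine hg.continuousAt.eventually (lt_mem_nhds ?_)
    simpa using hx₀.dotProduct_mulVec_pos (ne_zero_of_mem_unit_sphere ⟨v, hv⟩)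
  exact hnear.mono fun x hx => posDef_of_forall_sphere (hherm x) hx

theorem interior_setOf_mulVec_mulVec_sub_eq_zero {l m : Type*} [Fintype m] {A : Matrix l m ℝ}
    (hA : A ≠ 0) {x : n → ℝ} (hx : x ≠ 0) (C : Matrix m n ℝ) :
    interior {Z | A *ᵥ ((Z - C) *ᵥ x) = 0} = ∅ := by
  let L : Matrix m n ℝ →ₗ[ℝ] l → ℝ :=
    { toFun := fun E => A *ᵥ (E *ᵥ x)
      map_add' := fun E F => by rw [add_mulVec, mulVec_add]
      map_smul' := fun c E => by rw [smul_mulVec, mulVec_smul]; rfl }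
  have hL : LinearMap.ker L ≠ ⊤ := by
    intro htop
    refine hA (ext_of_mulVec_single fun j => ?_)
    have h := LinearMap.mem_ker.1 (htop ▸ Submodule.mem_top : vecMulVec (Pi.single j 1) x ∈ _)
    change A *ᵥ (vecMulVec (Pi.single j 1) x *ᵥ x) = 0 at h
    rw [vecMulVec_mulVec, op_smul_eq_smul, mulVec_smul, smul_eq_zero] at h
    rw [zero_mulVec]
    exact h.resolve_left (mt dotProduct_self_eq_zero.1 hx)
  have hset : {Z | A *ᵥ ((Z - C) *ᵥ x) = 0} = (Homeomorph.subRight C) ⁻¹' LinearMap.ker L := rfl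
  have hint : interior (LinearMap.ker L : Set (Matrix m n ℝ)) = ∅ :=
    Set.not_nonempty_iff_eq_empty.1 fun h => hL (Submodule.eq_top_of_nonempty_interior' _ h)
  rw [hset, ← (Homeomorph.subRight C).preimage_interior, hint, Set.preimage_empty]

end Topology

section ZrSet

variable {q r : ℕ} {P : Matrix (Fin q ⊕ Fin r) (Fin q ⊕ Fin r) ℝ}

theorem ZrPlusSet_subset_interior_ZrSet (hs : P.IsSymm) : ZrPlusSet P ⊆ interior (ZrSet P) :=
  interior_maximal (fun _ hZ => PosDef.posSemidef hZ)
    (isOpen_setOf_posDef (continuous_qmi P) (isHermitian_qmi hs))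

theorem ZrSet_eq_univ_of_toBlocks₂₂_eq_zero (hs : P.IsSymm) (hsc : (schurC P).PosSemidef)
    (hker : ∀ x, P.toBlocks₂₂ *ᵥ x = 0 → P.toBlocks₁₂ *ᵥ x = 0) (h0 : P.toBlocks₂₂ = 0) :
    ZrSet P = Set.univ :=
  Set.eq_univ_of_forall fun Z => by
    simpa [ZrSet, qmi_eq_schurC_add hs hker Z, h0] using hsc

theorem toBlocks₂₂_mulVec_eq_zero_of_mem_ZrSet (hs : P.IsSymm)
    (h22 : (-P.toBlocks₂₂).PosSemidef)
    (hker : ∀ x, P.toBlocks₂₂ *ᵥ x = 0 → P.toBlocks₁₂ *ᵥ x = 0) {x : Fin q → ℝ}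
    (hx : schurC P *ᵥ x = 0) {Z : Matrix (Fin r) (Fin q) ℝ} (hZ : Z ∈ ZrSet P) :
    P.toBlocks₂₂ *ᵥ ((Z - qmiCenter P) *ᵥ x) = 0 := by
  set y := (Z - qmiCenter P) *ᵥ x
  have hquad : x ⬝ᵥ qmi P Z *ᵥ x = y ⬝ᵥ P.toBlocks₂₂ *ᵥ y := by
    rw [qmi_eq_schurC_add hs hker, add_mulVec, dotProduct_add, hx, dotProduct_zero, zero_add,
      ← mulVec_mulVec, ← mulVec_mulVec, dotProduct_mulVec, vecMul_transpose]
  have hnonneg : 0 ≤ y ⬝ᵥ P.toBlocks₂₂ *ᵥ y := by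
    simpa [hquad] using hZ.dotProduct_mulVec_nonneg x
  have hnonpos : 0 ≤ -(y ⬝ᵥ P.toBlocks₂₂ *ᵥ y) := by
    simpa [neg_mulVec] using h22.dotProduct_mulVec_nonneg y
  have hzero : star y ⬝ᵥ (-P.toBlocks₂₂) *ᵥ y = 0 := by
    rw [star_trivial, neg_mulVec, dotProduct_neg]
    linarith
  simpa [neg_mulVec] using (h22.dotProduct_mulVec_zero_iff y).1 hzero

end ZrSet

/-- For `Π ∈ Π_{q,r}`, the set `Z_r(Π)` has nonempty interior
if and only if `Π₂₂ = 0` or `Π|Π₂₂` is positive definite. -/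
theorem stmt_2 {q r : ℕ} (P : Matrix (Fin q ⊕ Fin r) (Fin q ⊕ Fin r) ℝ) (hP : memPi P) :
    (interior (ZrSet P)).Nonempty ↔ (P.toBlocks₂₂ = 0 ∨ (schurC P).PosDef) := by
  obtain ⟨hs, h22, hsc, hker⟩ := hP
  constructor
  · rintro ⟨Z₀, hZ₀⟩
    by_contra! ⟨hA, hS⟩
    obtain ⟨x, hx0, hx⟩ : ∃ x ≠ 0, schurC P *ᵥ x = 0 :=
      exists_mulVec_eq_zero_iff.2 (by simpa [hsc.posDef_iff_det_ne_zero] using hS)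
    have hsub : ZrSet P ⊆ {Z | P.toBlocks₂₂ *ᵥ ((Z - qmiCenter P) *ᵥ x) = 0} :=
      fun _ hZ => toBlocks₂₂_mulVec_eq_zero_of_mem_ZrSet hs h22 hker hx hZ
    simpa only [interior_setOf_mulVec_mulVec_sub_eq_zero hA hx0, Set.mem_empty_iff_false]
      using interior_mono hsub hZ₀
  · rintro (h0 | hpd)
    · simp [ZrSet_eq_univ_of_toBlocks₂₂_eq_zero hs hsc hker h0]
    · refine ⟨qmiCenter P, ZrPlusSet_subset_interior_ZrSet hs ?_⟩
      rwa [ZrPlusSet, Set.mem_ofPred_eq, qmi_qmiCenter hs hker]
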